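/- There exists an uncountable set Y of points on the unit circle {z ∈ ℂ : |z| = 1} such that for every y ∈ Y the Rogers–Ramanujan continued fraction K does not converge to a finite value at y; that is, the sequence (P_n(y)/Q_n(y)) does not converge to any L ∈ ℂ. -/

import Mathlib

open Filter Topology

/-- Numerators `P_n` of the Rogers–Ramanujan continued fraction
`1 + q/(1 + q²/(1 + q³/(1 + ⋯)))`:  `P_{-1} = 1`, `P_0 = 1`,
`P_n = P_{n-1} + q^n P_{n-2}`. -/
noncomputable def rrP (q : ℂ) : ℕ → ℂ
  | 0 => 1
  | 1 => 1 + q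
  | n + 2 => rrP q (n + 1) + q ^ (n + 2) * rrP q n

/-- Denominators `Q_n` of the Rogers–Ramanujan continued fraction:  `Q_{-1} = 0`,
`Q_0 = 1`, `Q_n = Q_{n-1} + q^n Q_{n-2}`. -/
noncomputable def rrQ (q : ℂ) : ℕ → ℂ
  | 0 => 1
  | 1 => 1
  | n + 2 => rrQ q (n + 1) + q ^ (n + 2) * rrQ q n

/-!
Schur's polynomial form of the denominators,
`Q_n = ∑_j (-1)^j q^{j(5j+3)/2} [n+1, ⌊(n-5j)/2⌋]_q`, is evaluated at a primitive `5p`-th root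
of unity `q` with `p` odd: the Gaussian binomials in rows `5p` and `5p + 1` vanish away from the
ends, which leaves `Q_{5p-1} = 0` and `Q_{5p} = λ := -(q^p + q^{4p})`. As the recurrence has
`5p`-periodic coefficients, `Q_{n+5p} = λ Q_n`, so `Q_{5pt} = Q_{5pt+1} = λ^t`. If moreover
`q^p = e^{2πi/5}`, then `|λ| = 2 cos(2π/5) < 1`.

On the unit circle `|P_{n+1} Q_n - P_n Q_{n+1}| = 1`, so whenever `0 < |Q_n Q_{n+1}| < 1` two
consecutive approximants are more than `1` apart. This happens infinitely often on a `Gδ` subset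
of the circle that contains all the roots of unity above, hence is dense, hence uncountable by
Baire's theorem.
-/

section GaussBinom

variable {K : Type*} [Field K] {q : K}

def gaussBinom (q : K) : ℕ → ℤ → K
  | 0, k => if k = 0 then 1 else 0
  | N + 1, k => gaussBinom q N k + q ^ ((N : ℤ) + 1 - k) * gaussBinom q N (k - 1)

theorem gaussBinom_succ (N : ℕ) (k : ℤ) :
    gaussBinom q (N + 1) k = gaussBinom q N k + q ^ ((N : ℤ) + 1 - k) * gaussBinom q N (k - 1) :=
  rfl

theorem gaussBinom_of_neg {N : ℕ} {k : ℤ} (hk : k < 0) : gaussBinom q N k = 0 := by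
  induction N generalizing k with
  | zero => simp [gaussBinom, hk.ne]
  | succ N ih => rw [gaussBinom_succ, ih hk, ih (by omega), mul_zero, add_zero]

theorem gaussBinom_of_lt {N : ℕ} {k : ℤ} (hk : (N : ℤ) < k) : gaussBinom q N k = 0 := by
  induction N generalizing k with
  | zero => simp [gaussBinom, (show (0 : ℤ) < k by simpa using hk).ne']
  | succ N ih => rw [gaussBinom_succ, ih (by omega), ih (by omega), mul_zero, add_zero]

@[simp]
theorem gaussBinom_zero_right (N : ℕ) : gaussBinom q N 0 = 1 := by
  induction N with
  | zero => rfl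
  | succ N ih => rw [gaussBinom_succ, ih, gaussBinom_of_neg (by omega), mul_zero, add_zero]

@[simp]
theorem gaussBinom_self (N : ℕ) : gaussBinom q N N = 1 := by
  induction N with
  | zero => rfl
  | succ N ih =>
    rw [gaussBinom_succ, gaussBinom_of_lt (by omega), Nat.cast_succ, sub_self,
      add_sub_cancel_right, ih, zpow_zero, zero_add, one_mul]

theorem gaussBinom_succ' (hq : q ≠ 0) (N : ℕ) (k : ℤ) :
    gaussBinom q (N + 1) k = gaussBinom q N (k - 1) + q ^ k * gaussBinom q N k := by
  induction N generalizing k with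
  | zero =>
    rcases lt_trichotomy k 0 with hk | rfl | hk
    · simp [gaussBinom_of_neg hk, gaussBinom_of_neg (show k - 1 < 0 by omega)]
    · simp [gaussBinom_succ, gaussBinom_of_neg (show (-1 : ℤ) < 0 by omega)]
    · rcases eq_or_ne k 1 with rfl | hk1
      · simp [gaussBinom_succ, gaussBinom_of_lt (show ((0 : ℕ) : ℤ) < 1 by omega)]
      · simp [gaussBinom_of_lt (show ((1 : ℕ) : ℤ) < k by omega),
          gaussBinom_of_lt (show ((0 : ℕ) : ℤ) < k - 1 by omega),
          gaussBinom_of_lt (show ((0 : ℕ) : ℤ) < k by omega)]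
  | succ N ih =>
    have h₁ := gaussBinom_succ (q := q) (N + 1) k
    have h₂ : gaussBinom q (N + 1) (k - 1)
        = gaussBinom q N (k - 1) + q ^ ((N : ℤ) + 1 + 1 - k) * gaussBinom q N (k - 1 - 1) := by
      rw [gaussBinom_succ, sub_sub_eq_add_sub]
    have h₃ := gaussBinom_succ (q := q) N k
    have hN : q ^ ((N : ℤ) + 1 + 1 - k) * q ^ (k - 1) = q ^ k * q ^ ((N : ℤ) + 1 - k) := by
      rw [← zpow_add₀ hq, ← zpow_add₀ hq]; ring_nf
    push_cast at h₁
    linear_combination h₁ + ih k + q ^ ((N : ℤ) + 1 + 1 - k) * ih (k - 1) - h₂ - q ^ k * h₃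
      + gaussBinom q N (k - 1) * hN

theorem one_sub_zpow_mul_gaussBinom_succ (hq : q ≠ 0) (N : ℕ) (k : ℤ) :
    (1 - q ^ ((N : ℤ) + 1 - k)) * gaussBinom q (N + 1) k
      = (1 - q ^ ((N : ℤ) + 1)) * gaussBinom q N k := by
  have hN : q ^ ((N : ℤ) + 1 - k) * q ^ k = q ^ ((N : ℤ) + 1) := by
    rw [← zpow_add₀ hq, sub_add_cancel]
  linear_combination gaussBinom_succ (q := q) N k
    - q ^ ((N : ℤ) + 1 - k) * gaussBinom_succ' hq N k - gaussBinom q N k * hN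

theorem gaussBinom_eq_zero_of_isPrimitiveRoot {m : ℕ} (hq : IsPrimitiveRoot q m) {k : ℤ}
    (hk₀ : 0 < k) (hkm : k < m) : gaussBinom q m k = 0 := by
  obtain ⟨N, rfl⟩ : ∃ N, m = N + 1 := Nat.exists_eq_succ_of_ne_zero (by omega)
  lift k to ℕ using hk₀.le
  have h := one_sub_zpow_mul_gaussBinom_succ (hq.ne_zero (by omega)) N k
  have hpow : q ^ ((N : ℤ) + 1 - k) ≠ 1 := by
    rw [show (N : ℤ) + 1 - k = ((N + 1 - k : ℕ) : ℤ) by omega, zpow_natCast]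
    exact hq.pow_ne_one_of_pos_of_lt (by omega) (by omega)
  rw [← Nat.cast_succ, zpow_natCast, hq.pow_eq_one, sub_self, zero_mul] at h
  exact (mul_eq_zero.mp h).resolve_left (sub_ne_zero.mpr hpow.symm)

theorem gaussBinom_eq_zero_of_isPrimitiveRoot_of_ne {m : ℕ} (hq : IsPrimitiveRoot q m) {k : ℤ}
    (h₀ : k ≠ 0) (hm : k ≠ m) : gaussBinom q m k = 0 := by
  rcases lt_or_gt_of_ne h₀ with hk | hk
  · exact gaussBinom_of_neg hk
  rcases lt_or_gt_of_ne hm with hkm | hkm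
  · exact gaussBinom_eq_zero_of_isPrimitiveRoot hq hk hkm
  · exact gaussBinom_of_lt hkm

theorem gaussBinom_succ_eq_zero_of_isPrimitiveRoot_of_ne {m : ℕ} (hq : IsPrimitiveRoot q m)
    {k : ℤ} (h₀ : k ≠ 0) (h₁ : k ≠ 1) (hm : k ≠ m) (hm₁ : k ≠ m + 1) :
    gaussBinom q (m + 1) k = 0 := by
  rw [gaussBinom_succ, gaussBinom_eq_zero_of_isPrimitiveRoot_of_ne hq h₀ hm,
    gaussBinom_eq_zero_of_isPrimitiveRoot_of_ne hq (by omega) (by omega), mul_zero, add_zero]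

theorem gaussBinom_succ_self_of_isPrimitiveRoot {m : ℕ} (hq : IsPrimitiveRoot q m) (hm : 1 < m) :
    gaussBinom q (m + 1) m = 1 := by
  rw [gaussBinom_succ, gaussBinom_self,
    gaussBinom_eq_zero_of_isPrimitiveRoot_of_ne hq (by omega) (by omega), mul_zero, add_zero]

theorem gaussBinom_add_two_sub (hq : q ≠ 0) (N : ℕ) (k : ℤ) :
    gaussBinom q (N + 2) k - gaussBinom q (N + 1) k - q ^ (N + 1) * gaussBinom q N (k - 1)
      = q ^ ((N : ℤ) + 2 - k) * gaussBinom q N (k - 2) := by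
  have h₁ := gaussBinom_succ (q := q) (N + 1) k
  have h₂ := gaussBinom_succ' hq N (k - 1)
  have hN : q ^ ((N : ℤ) + 2 - k) * q ^ (k - 1) = q ^ (N + 1) := by
    rw [← zpow_add₀ hq, ← zpow_natCast]; push_cast; ring_nf
  push_cast at h₁
  rw [sub_sub, one_add_one_eq_two] at h₂
  rw [show (N : ℤ) + 1 + 1 - k = (N : ℤ) + 2 - k by ring] at h₁
  linear_combination h₁ + q ^ ((N : ℤ) + 2 - k) * h₂ + gaussBinom q N (k - 1) * hN

theorem gaussBinom_add_two_sub' (hq : q ≠ 0) (N : ℕ) (k : ℤ) :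
    gaussBinom q (N + 2) k - gaussBinom q (N + 1) (k - 1) - q ^ (N + 1) * gaussBinom q N (k - 1)
      = q ^ k * gaussBinom q N k := by
  have h₁ := gaussBinom_succ' hq (N + 1) k
  have h₂ := gaussBinom_succ (q := q) N k
  have hN : q ^ k * q ^ ((N : ℤ) + 1 - k) = q ^ (N + 1) := by
    rw [← zpow_add₀ hq, ← zpow_natCast]; push_cast; ring_nf
  linear_combination h₁ + q ^ k * h₂ + gaussBinom q N (k - 1) * hN

end GaussBinom

section Schur

variable {K : Type*} [Field K] {q : K}

open Finset

def schurTerm (q : K) (n : ℕ) (j : ℤ) : K :=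
  (-1) ^ j * q ^ (j * (5 * j + 3) / 2) * gaussBinom q (n + 1) (((n : ℤ) - 5 * j) / 2)

noncomputable def schurSum (q : K) (n : ℕ) : K :=
  ∑ j ∈ Icc (-(n : ℤ) - 1) n, schurTerm q n j

theorem schurTerm_eq_zero {n : ℕ} {j : ℤ}
    (h : (n : ℤ) - 5 * j < 0 ∨ 2 * n + 4 ≤ (n : ℤ) - 5 * j) : schurTerm q n j = 0 := by
  rw [schurTerm]
  rcases h with h | h
  · rw [gaussBinom_of_neg (by omega), mul_zero]
  · rw [gaussBinom_of_lt (by push_cast; omega), mul_zero]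

theorem sum_schurTerm_of_subset {n : ℕ} {s : Finset ℤ} (hs : Icc (-(n : ℤ) - 1) n ⊆ s) :
    ∑ j ∈ s, schurTerm q n j = schurSum q n :=
  (sum_subset hs fun j _ hj => schurTerm_eq_zero (by rw [mem_Icc] at hj; omega)).symm

def schurDefect (q : K) (n : ℕ) (j : ℤ) : K :=
  schurTerm q (n + 2) j - schurTerm q (n + 1) j - q ^ (n + 2) * schurTerm q n j

theorem schurDefect_add_schurDefect_succ (hq : q ≠ 0) {n : ℕ} {j : ℤ}
    (hj : ((n : ℤ) + j) % 2 = 1) : schurDefect q n j + schurDefect q n (j + 1) = 0 := by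
  obtain ⟨s, hs⟩ : ∃ s : ℤ, (n : ℤ) + 1 - 5 * j = 2 * s :=
    ⟨((n : ℤ) + 1 - 5 * j) / 2, by omega⟩
  have hexp : (j + 1) * (5 * (j + 1) + 3) / 2 = j * (5 * j + 3) / 2 + (5 * j + 4) := by
    rw [show (j + 1) * (5 * (j + 1) + 3) = j * (5 * j + 3) + (5 * j + 4) * 2 by ring,
      Int.add_mul_ediv_right _ _ two_ne_zero]
  have hI := gaussBinom_add_two_sub hq (n + 1) s
  have hII := gaussBinom_add_two_sub' hq (n + 1) (s - 2)
  have hpow : q ^ (5 * j + 4) * q ^ (s - 2) = q ^ (((n + 1 : ℕ) : ℤ) + 2 - s) := by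
    rw [← zpow_add₀ hq]; congr 1; push_cast; omega
  simp only [schurDefect, schurTerm, Nat.cast_add, Nat.cast_ofNat, Nat.cast_one, hexp,
    zpow_add₀ hq (j * (5 * j + 3) / 2) (5 * j + 4),
    zpow_add_one₀ (show (-1 : K) ≠ 0 by norm_num) j]
  rw [show ((n : ℤ) + 2 - 5 * j) / 2 = s by omega, show ((n : ℤ) + 1 - 5 * j) / 2 = s by omega,
    show ((n : ℤ) - 5 * j) / 2 = s - 1 by omega,
    show ((n : ℤ) + 2 - 5 * (j + 1)) / 2 = s - 2 by omega,
    show ((n : ℤ) + 1 - 5 * (j + 1)) / 2 = s - 3 by omega,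
    show ((n : ℤ) - 5 * (j + 1)) / 2 = s - 3 by omega]
  rw [show s - 2 - 1 = s - 3 by ring] at hII
  rw [show n + 1 + 2 = n + 2 + 1 from rfl, show n + 1 + 1 = n + 2 from rfl] at hI hII
  linear_combination (-1) ^ j * q ^ (j * (5 * j + 3) / 2) * hI
    - (-1) ^ j * q ^ (j * (5 * j + 3) / 2) * q ^ (5 * j + 4) * hII
    - (-1) ^ j * q ^ (j * (5 * j + 3) / 2) * gaussBinom q (n + 1) (s - 2) * hpow

theorem schurSum_add_two (hq : q ≠ 0) (n : ℕ) :
    schurSum q (n + 2) = schurSum q (n + 1) + q ^ (n + 2) * schurSum q n := by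
  have hs : ∀ m ≤ n + 2, Icc (-(m : ℤ) - 1) m ⊆ Icc (-(n : ℤ) - 3) (n + 2) := fun m hm =>
    Icc_subset_Icc (by omega) (by omega)
  have hsum : ∑ j ∈ Icc (-(n : ℤ) - 3) (n + 2), schurDefect q n j = 0 := by
    refine sum_involution (fun j _ => if ((n : ℤ) + j) % 2 = 1 then j + 1 else j - 1)
      (fun j _ => ?_) (fun j _ _ => by split_ifs <;> omega)
      (fun j hj => by rw [mem_Icc] at hj ⊢; split_ifs <;> omega)
      (fun j _ => by split_ifs <;> omega)
    split_ifs with hj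
    · exact schurDefect_add_schurDefect_succ hq hj
    · rw [add_comm, ← schurDefect_add_schurDefect_succ hq (n := n) (j := j - 1) (by omega),
        sub_add_cancel]
  simp only [schurDefect, sum_sub_distrib, ← mul_sum] at hsum
  rw [sum_schurTerm_of_subset (hs _ le_rfl), sum_schurTerm_of_subset (hs _ (by omega)),
    sum_schurTerm_of_subset (hs _ (by omega))] at hsum
  linear_combination hsum

theorem schurSum_zero : schurSum q 0 = 1 := by
  rw [schurSum, sum_eq_single 0 (fun j _ hj => schurTerm_eq_zero (by omega)) (by simp)]
  simp [schurTerm]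

theorem schurSum_one : schurSum q 1 = 1 := by
  rw [schurSum, sum_eq_single 0 (fun j _ hj => schurTerm_eq_zero (by omega)) (by simp)]
  simp [schurTerm]

end Schur

section RootOfUnity

variable {K : Type*} [Field K] {q : K}

open Finset

theorem schurSum_eq_zero_of_isPrimitiveRoot {n : ℕ} (hq : IsPrimitiveRoot q (n + 1))
    (h5 : 5 ∣ n + 1) : schurSum q n = 0 := by
  obtain ⟨t, ht⟩ := h5
  refine sum_eq_zero fun j _ => ?_
  rw [schurTerm,
    gaussBinom_eq_zero_of_isPrimitiveRoot_of_ne hq (by omega) (by push_cast; omega), mul_zero]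

theorem schurSum_of_isPrimitiveRoot {p : ℕ} (hp : Odd p) (hq : IsPrimitiveRoot q (5 * p)) :
    schurSum q (5 * p) = -(q ^ p + q ^ (4 * p)) := by
  obtain ⟨u, hu⟩ := hp
  have hpow : ∀ r : ℕ, q ^ ((5 * p * u + r : ℕ) : ℤ) = q ^ r := fun r => by
    rw [zpow_natCast, pow_add, pow_mul, hq.pow_eq_one, one_pow, one_mul]
  have hodd : Odd (p : ℤ) := ⟨u, by omega⟩
  have hexp₁ : (p : ℤ) * (5 * p + 3) / 2 = ((5 * p * u + 4 * p : ℕ) : ℤ) := by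
    rw [show (p : ℤ) * (5 * p + 3) = 2 * ((5 * p * u + 4 * p : ℕ) : ℤ) by
      push_cast; rw [hu]; push_cast; ring]
    omega
  have hexp₂ : -(p : ℤ) * (5 * -p + 3) / 2 = ((5 * p * u + p : ℕ) : ℤ) := by
    rw [show -(p : ℤ) * (5 * -p + 3) = 2 * ((5 * p * u + p : ℕ) : ℤ) by
      push_cast; rw [hu]; push_cast; ring]
    omega
  rw [schurSum, sum_eq_add (p : ℤ) (-(p : ℤ)) (by omega) ?_
    (fun h => absurd (mem_Icc.mpr (by push_cast; omega)) h)
    (fun h => absurd (mem_Icc.mpr (by push_cast; omega)) h)]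
  · rw [schurTerm, schurTerm, hodd.neg_one_zpow, hodd.neg.neg_one_zpow, hexp₁, hexp₂, hpow,
      hpow,
      show (((5 * p : ℕ) : ℤ) - 5 * p) / 2 = 0 by push_cast; omega,
      show (((5 * p : ℕ) : ℤ) - 5 * -p) / 2 = ((5 * p : ℕ) : ℤ) by push_cast; omega,
      gaussBinom_zero_right, gaussBinom_succ_self_of_isPrimitiveRoot hq (by omega)]
    ring
  · intro j _ hj
    rw [schurTerm, gaussBinom_succ_eq_zero_of_isPrimitiveRoot_of_ne hq (by omega) (by omega)
      (by push_cast; omega) (by push_cast; omega), mul_zero]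

end RootOfUnity

section Denominators

theorem rrQ_add_two (q : ℂ) (n : ℕ) :
    rrQ q (n + 2) = rrQ q (n + 1) + q ^ (n + 2) * rrQ q n :=
  rfl

theorem rrP_add_two (q : ℂ) (n : ℕ) :
    rrP q (n + 2) = rrP q (n + 1) + q ^ (n + 2) * rrP q n :=
  rfl

theorem continuous_rrQ (n : ℕ) : Continuous fun q => rrQ q n := by
  induction n using Nat.twoStepInduction with
  | zero => exact continuous_const
  | one => exact continuous_const
  | more n h₀ h₁ => exact h₁.add ((continuous_pow _).mul h₀)

theorem rrQ_eq_schurSum {q : ℂ} (hq : q ≠ 0) (n : ℕ) : rrQ q n = schurSum q n := by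
  induction n using Nat.twoStepInduction with
  | zero => exact schurSum_zero.symm
  | one => exact schurSum_one.symm
  | more n h₀ h₁ => rw [rrQ_add_two, schurSum_add_two hq, h₀, h₁]

theorem rrQ_add_of_pow_eq_one {q c : ℂ} {m : ℕ} (hq : q ^ (m + 1) = 1) (h₀ : rrQ q m = 0)
    (h₁ : rrQ q (m + 1) = c) (n : ℕ) : rrQ q (n + (m + 1)) = c * rrQ q n := by
  induction n using Nat.twoStepInduction with
  | zero => rw [zero_add, h₁]; exact (mul_one c).symm
  | one =>
    rw [add_comm 1, rrQ_add_two, h₁, h₀, mul_zero, add_zero]; exact (mul_one c).symm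
  | more n ih₀ ih₁ =>
    rw [show n + 2 + (m + 1) = n + (m + 1) + 2 by ring, rrQ_add_two,
      show n + (m + 1) + 1 = n + 1 + (m + 1) by ring, ih₀, ih₁,
      show n + (m + 1) + 2 = n + 2 + (m + 1) by ring, pow_add, hq, mul_one, rrQ_add_two]
    ring

theorem rrQ_add_mul_of_pow_eq_one {q c : ℂ} {m : ℕ} (hq : q ^ (m + 1) = 1) (h₀ : rrQ q m = 0)
    (h₁ : rrQ q (m + 1) = c) (n t : ℕ) : rrQ q (n + t * (m + 1)) = c ^ t * rrQ q n := by
  induction t with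
  | zero => rw [zero_mul, add_zero, pow_zero, one_mul]
  | succ t ih =>
    rw [add_mul, one_mul, ← add_assoc, rrQ_add_of_pow_eq_one hq h₀ h₁, ih, pow_succ']
    ring

theorem frequently_norm_rrQ_mul_mem_Ioo {q : ℂ} {p : ℕ} (hp : Odd p)
    (hq : IsPrimitiveRoot q (5 * p)) (hc : ‖q ^ p + q ^ (4 * p)‖ ∈ Set.Ioo 0 1) :
    ∃ᶠ n in atTop, ‖rrQ q n * rrQ q (n + 1)‖ ∈ Set.Ioo 0 1 := by
  obtain ⟨m, hm⟩ : ∃ m, 5 * p = m + 1 := ⟨5 * p - 1, by obtain ⟨u, hu⟩ := hp; omega⟩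
  rw [hm] at hq
  have hq₀ : q ≠ 0 := hq.ne_zero (by omega)
  have h₀ : rrQ q m = 0 := by
    rw [rrQ_eq_schurSum hq₀, schurSum_eq_zero_of_isPrimitiveRoot hq ⟨p, hm.symm⟩]
  have h₁ : rrQ q (m + 1) = -(q ^ p + q ^ (4 * p)) := by
    rw [rrQ_eq_schurSum hq₀, ← hm, schurSum_of_isPrimitiveRoot hp (hm ▸ hq)]
  refine frequently_atTop.mpr fun N => ⟨(N + 1) * (m + 1), by nlinarith, ?_⟩
  have e₀ := rrQ_add_mul_of_pow_eq_one hq.pow_eq_one h₀ h₁ 0 (N + 1)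
  have e₁ := rrQ_add_mul_of_pow_eq_one hq.pow_eq_one h₀ h₁ 1 (N + 1)
  rw [zero_add] at e₀
  rw [add_comm] at e₁
  rw [e₀, e₁, show rrQ q 0 = 1 from rfl, show rrQ q 1 = 1 from rfl, mul_one, ← pow_add,
    norm_pow, norm_neg]
  exact ⟨pow_pos hc.1 _, pow_lt_one₀ hc.1.le hc.2 (by omega)⟩

end Denominators

section Divergence

theorem norm_rrP_mul_rrQ_sub {q : ℂ} (hq : ‖q‖ = 1) (n : ℕ) :
    ‖rrP q (n + 1) * rrQ q n - rrP q n * rrQ q (n + 1)‖ = 1 := by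
  induction n with
  | zero => simpa [rrP, rrQ] using hq
  | succ n ih =>
    rw [rrP_add_two, rrQ_add_two, show ∀ a b c d x : ℂ, (a + x * c) * b - a * (b + x * d)
      = -x * (a * d - c * b) from fun _ _ _ _ _ => by ring, norm_mul, norm_neg, norm_pow, hq,
      one_pow, one_mul, ih]

theorem not_tendsto_of_frequently_norm_rrQ_mul_mem_Ioo {q : ℂ} (hq : ‖q‖ = 1)
    (h : ∃ᶠ n in atTop, ‖rrQ q n * rrQ q (n + 1)‖ ∈ Set.Ioo 0 1) (L : ℂ) :
    ¬ Tendsto (fun n => rrP q n / rrQ q n) atTop (𝓝 L) := by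
  intro hL
  have hstep :
      Tendsto (fun n => rrP q (n + 1) / rrQ q (n + 1) - rrP q n / rrQ q n) atTop (𝓝 0) := by
    simpa using (hL.comp (tendsto_add_atTop_nat 1)).sub hL
  have hclose_ev : ∀ᶠ n in atTop, ‖rrP q (n + 1) / rrQ q (n + 1) - rrP q n / rrQ q n‖ < 1 :=
    hstep.norm.eventually (gt_mem_nhds (by norm_num))
  obtain ⟨n, hclose, hsmall⟩ := (hclose_ev.and_frequently h).exists
  have hQ : rrQ q n ≠ 0 ∧ rrQ q (n + 1) ≠ 0 := mul_ne_zero_iff.mp (norm_pos_iff.mp hsmall.1)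
  have hdiff : rrP q (n + 1) / rrQ q (n + 1) - rrP q n / rrQ q n
      = (rrP q (n + 1) * rrQ q n - rrP q n * rrQ q (n + 1)) / (rrQ q n * rrQ q (n + 1)) := by
    field_simp [hQ.1, hQ.2]
  rw [hdiff, norm_div, norm_rrP_mul_rrQ_sub hq] at hclose
  exact hclose.not_gt (one_lt_one_div hsmall.1 hsmall.2)

end Divergence

section Baire

theorem isGδ_setOf_frequently {X : Type*} [TopologicalSpace X] {s : ℕ → Set X}
    (hs : ∀ n, IsOpen (s n)) : IsGδ {x | ∃ᶠ n in atTop, x ∈ s n} := by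
  have : {x | ∃ᶠ n in atTop, x ∈ s n} = ⋂ N, ⋃ n ≥ N, s n := by
    ext x; simp [frequently_atTop]
  rw [this]
  exact .iInter_of_isOpen fun N => isOpen_biUnion fun n _ => hs n

theorem IsGδ.not_countable_of_dense {X : Type*} [TopologicalSpace X] [BaireSpace X] [T1Space X]
    [∀ x : X, NeBot (𝓝[≠] x)] [Nonempty X] {s : Set X} (hs : IsGδ s) (hd : Dense s) :
    ¬ s.Countable := by
  intro hc
  have hcompl : sᶜ ∈ residual X := by
    refine mem_of_superset ((countable_bInter_mem hc).mpr fun x _ =>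
      residual_of_dense_open isOpen_compl_singleton (dense_compl_singleton x)) ?_
    intro y hy hys
    exact Set.mem_iInter₂.mp hy y hys rfl
  obtain ⟨x, hxs, hxc⟩ :=
    (dense_of_mem_residual (inter_mem (residual_of_dense_Gδ hs hd) hcompl)).nonempty
  exact hxc hxs

end Baire

section Circle

open Complex Real

theorem norm_exp_two_pi_div_five_add_pow_four_mem_Ioo :
    ‖Complex.exp (2 * π * I / 5) + Complex.exp (2 * π * I / 5) ^ 4‖ ∈ Set.Ioo 0 1 := by
  have h : Complex.exp (2 * π * I / 5) + Complex.exp (2 * π * I / 5) ^ 4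
      = ((2 * Real.cos (2 * π / 5) : ℝ) : ℂ) := by
    rw [← Complex.exp_nat_mul, ofReal_mul, ofReal_ofNat, ofReal_cos, two_cos]
    congr 1
    · push_cast; ring_nf
    · rw [Complex.exp_eq_exp_iff_exists_int]
      exact ⟨1, by push_cast; ring⟩
  have hcos₀ : 0 < Real.cos (2 * π / 5) :=
    Real.cos_pos_of_mem_Ioo ⟨by linarith [pi_pos], by linarith [pi_pos]⟩
  have hcos₁ : Real.cos (2 * π / 5) < 1 / 2 := by
    rw [← cos_pi_div_three]
    exact Real.cos_lt_cos_of_nonneg_of_le_pi (by positivity) (by linarith [pi_pos])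
      (by linarith [pi_pos])
  rw [h, norm_real, Real.norm_eq_abs, abs_of_pos (by positivity)]
  constructor <;> linarith

theorem frequently_norm_rrQ_mul_mem_Ioo_circleExp {p : ℕ} {k : ℤ} (hp : p.Prime) (h5 : 5 < p)
    (hk : k % 5 = 1) (hpk : ¬ (p : ℤ) ∣ k) :
    ∃ᶠ n in atTop, ‖rrQ (Circle.exp (2 * π * k / (5 * p))) n
      * rrQ (Circle.exp (2 * π * k / (5 * p))) (n + 1)‖ ∈ Set.Ioo 0 1 := by
  have hq : IsPrimitiveRoot (Circle.exp (2 * π * k / (5 * p)) : ℂ) (5 * p) := by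
    have hcop : IsCoprime k ((5 * p : ℕ) : ℤ) := by
      push_cast
      exact IsCoprime.mul_right ⟨1, -(k / 5), by omega⟩
        ((Nat.prime_iff_prime_int.mp hp).coprime_iff_not_dvd.mpr hpk).symm
    convert Complex.isPrimitiveRoot_exp_of_isCoprime k (5 * p) (by omega) hcop using 2
    rw [Circle.coe_exp]
    push_cast
    ring_nf
  have hζ : (Circle.exp (2 * π * k / (5 * p)) : ℂ) ^ p = Complex.exp (2 * π * I / 5) := by
    have hk' : (k : ℂ) = 5 * ((k / 5 : ℤ) : ℂ) + 1 := by
      exact_mod_cast (by omega : k = 5 * (k / 5) + 1)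
    have hp₀ : (p : ℂ) ≠ 0 := by exact_mod_cast hp.ne_zero
    rw [Circle.coe_exp, ← Complex.exp_nat_mul, Complex.exp_eq_exp_iff_exists_int]
    refine ⟨k / 5, ?_⟩
    push_cast
    rw [hk']
    field_simp
    ring
  refine frequently_norm_rrQ_mul_mem_Ioo (hp.odd_of_ne_two (by omega)) hq ?_
  rw [mul_comm 4, pow_mul, hζ]
  exact norm_exp_two_pi_div_five_add_pow_four_mem_Ioo

theorem exists_prime_angle_mem_Ioo {a b : ℝ} (hab : a < b) :
    ∃ (p : ℕ) (k : ℤ), p.Prime ∧ 5 < p ∧ k % 5 = 1 ∧ ¬ (p : ℤ) ∣ k ∧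
      2 * π * k / (5 * p) ∈ Set.Ioo a b := by
  obtain ⟨p, hle, hp⟩ := Nat.exists_infinite_primes (⌈22 * π / (5 * (b - a))⌉₊ + 6)
  have hp₀ : (0 : ℝ) < p := by exact_mod_cast hp.pos
  set ρ : ℝ := 5 * p / (2 * π) with hρ_def
  have hρ : 0 < ρ := by positivity
  have hρab : 11 < ρ * (b - a) := by
    have h₁ : 22 * π / (5 * (b - a)) < p := by
      have := Nat.le_ceil (22 * π / (5 * (b - a)))
      have : ((⌈22 * π / (5 * (b - a))⌉₊ + 6 : ℕ) : ℝ) ≤ p := by exact_mod_cast hle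
      push_cast at this
      linarith
    rw [div_lt_iff₀ (by linarith)] at h₁
    rw [hρ_def, div_mul_eq_mul_div, lt_div_iff₀ (by positivity)]
    nlinarith [pi_pos]
  -- Of the two candidates `k₀, k₀ + 5` with `k₀ ≡ 1 (mod 5)`, at most one is divisible by `p > 5`.
  obtain ⟨k, hk5, hpk, hlo, hhi⟩ :
      ∃ k : ℤ, k % 5 = 1 ∧ ¬ (p : ℤ) ∣ k ∧ ρ * a < k ∧ (k : ℝ) ≤ ρ * a + 11 := by
    have h₁ := Int.floor_le (ρ * a / 5)
    have h₂ := Int.lt_floor_add_one (ρ * a / 5)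
    by_cases hdvd : (p : ℤ) ∣ 5 * ⌊ρ * a / 5⌋ + 6
    · refine ⟨5 * ⌊ρ * a / 5⌋ + 6 + 5, by omega, fun h => ?_, ?_, ?_⟩
      · have := Int.le_of_dvd (by norm_num) ((Int.dvd_add_right hdvd).mp h)
        omega
      all_goals push_cast; linarith
    · exact ⟨5 * ⌊ρ * a / 5⌋ + 6, by omega, hdvd, by push_cast; linarith,
        by push_cast; linarith⟩
  have hangle : 2 * π * k / (5 * p) = k / ρ := by
    rw [hρ_def]; field_simp
  refine ⟨p, k, hp, by omega, hk5, hpk, ?_, ?_⟩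
  · rw [hangle, lt_div_iff₀ hρ]; linarith
  · rw [hangle, div_lt_iff₀ hρ]; linarith

instance : Nontrivial Circle :=
  ⟨1, -1, fun h => by
    have := congrArg (fun z : Circle => (z : ℂ)) h
    norm_num at this⟩

def smallDenominators : Set Circle :=
  {z | ∃ᶠ n in atTop, ‖rrQ z n * rrQ z (n + 1)‖ ∈ Set.Ioo 0 1}

theorem isGδ_smallDenominators : IsGδ smallDenominators :=
  isGδ_setOf_frequently fun n => isOpen_Ioo.preimage <| continuous_norm.comp <|
    ((continuous_rrQ n).mul (continuous_rrQ (n + 1))).comp continuous_subtype_val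

theorem dense_smallDenominators : Dense smallDenominators := by
  have : Dense (Circle.exp ⁻¹' smallDenominators) := dense_of_exists_between fun a b hab => by
    obtain ⟨p, k, hp, h5, hk, hpk, hmem⟩ := exists_prime_angle_mem_Ioo hab
    exact ⟨_, frequently_norm_rrQ_mul_mem_Ioo_circleExp hp h5 hk hpk, hmem⟩
  exact (Circle.exp_surjective.denseRange.dense_image Circle.exp.continuous this).mono
    (Set.image_preimage_subset _ _)

end Circle

theorem stmt11 :
    ∃ Y : Set ℂ, ¬ Y.Countable ∧ (∀ y ∈ Y, ‖y‖ = 1) ∧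
      ∀ y ∈ Y, ¬ ∃ L : ℂ, Tendsto (fun n => rrP y n / rrQ y n) atTop (𝓝 L) := by
  refine ⟨(↑) '' smallDenominators, fun h => ?_, ?_, ?_⟩
  · exact isGδ_smallDenominators.not_countable_of_dense dense_smallDenominators
      (Set.countable_of_injective_of_countable_image Subtype.val_injective.injOn h)
  · rintro _ ⟨z, -, rfl⟩
    exact Circle.norm_coe z
  · rintro _ ⟨z, hz, rfl⟩ ⟨L, hL⟩
    exact not_tendsto_of_frequently_norm_rrQ_mul_mem_Ioo (Circle.norm_coe z) hz L hL
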